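/- arXiv:1807.02335 — 3 statements merged into one kernel-verified Lean document; each statement's English description precedes it below -/
import Mathlib

section
/- Let P ⊆ Δ be a subset satisfying: (i) P ∪ (−P) = Δ, (ii) P ∩ (−P) = ∅, and (iii) whenever α, β ∈ P and α + β ∈ Δ, also α + β ∈ P (i.e., Δ = P ⊔ (−P) is a triangular decomposition with positive part P). Then there exists a unique strict total order ≺ on ℕ such that P = {ε_i − ε_j : i, j ∈ ℕ, i ≺ j}. Conversely, for every strict total order ≺ on ℕ the set {ε_i − ε_j : i ≺ j} satisfies (i), (ii), (iii). -/
open Pointwise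

/-- `ε i = Finsupp.single i 1` in `ℕ →₀ ℤ`. -/
noncomputable def eps (i : ℕ) : ℕ →₀ ℤ := Finsupp.single i 1

/-- The root system `Δ = {ε_i - ε_j : i ≠ j}` of `sl(∞)`. -/
def Delta : Set (ℕ →₀ ℤ) := {x | ∃ i j : ℕ, i ≠ j ∧ x = eps i - eps j}

/-- The positive roots attached to a strict order `r` on `ℕ`. -/
def posRoots (r : ℕ → ℕ → Prop) : Set (ℕ →₀ ℤ) :=
  {x | ∃ i j : ℕ, r i j ∧ x = eps i - eps j}

/-! Given `P`, the order is forced: `i ≺ j` must mean `ε_i - ε_j ∈ P`. Condition (i) makes this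
relation total, (ii) makes it asymmetric, and (iii) applied to `(ε_i - ε_j) + (ε_j - ε_k)` makes it
transitive. Conversely, a sum of two roots `ε_i - ε_j` and `ε_k - ε_l` is a root only when `j = k`
or `i = l`, where transitivity of `≺` gives (iii). -/

lemma eps_injective : Function.Injective eps :=
  Finsupp.single_left_injective one_ne_zero

lemma eps_sub_eps_eq_zero_iff {i j : ℕ} : eps i - eps j = 0 ↔ i = j :=
  sub_eq_zero.trans eps_injective.eq_iff

lemma neg_eps_sub_eps (i j : ℕ) : -(eps i - eps j) = eps j - eps i :=
  neg_sub _ _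

lemma eps_sub_eps_add_eps_sub_eps (i j k : ℕ) : eps i - eps j + (eps j - eps k) = eps i - eps k :=
  sub_add_sub_cancel _ _ _

lemma eps_sub_eps_inj {i j k l : ℕ} (hij : i ≠ j) :
    eps i - eps j = eps k - eps l ↔ i = k ∧ j = l := by
  rw [sub_eq_sub_iff_add_eq_add, eps, eps, eps, eps,
    Finsupp.single_add_single_eq_single_add_single one_ne_zero one_ne_zero]
  constructor
  · rintro (⟨hik, hlj⟩ | ⟨-, hij', -⟩ | ⟨h2, -⟩)
    · exact ⟨hik, hlj.symm⟩
    · exact absurd hij' hij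
    · exact absurd h2 (by decide)
  · rintro ⟨rfl, rfl⟩
    exact Or.inl ⟨rfl, rfl⟩

lemma eps_sub_eps_mem_Delta {i j : ℕ} : eps i - eps j ∈ Delta ↔ i ≠ j := by
  refine ⟨?_, fun h => ⟨i, j, h, rfl⟩⟩
  rintro ⟨k, l, hkl, h⟩ rfl
  rw [sub_self, eq_comm, eps_sub_eps_eq_zero_iff] at h
  exact hkl h

/-- The coefficients of the left side at `i` and at `k` are both at least `1`, while a root has
only one positive coefficient. -/
lemma eq_or_eq_of_eps_sub_eps_add_eps_sub_eps_mem_Delta {i j k l : ℕ} (hij : i ≠ j) (hkl : k ≠ l)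
    (h : eps i - eps j + (eps k - eps l) ∈ Delta) : j = k ∨ i = l := by
  by_contra! hne
  obtain ⟨m, n, -, hmn⟩ := h
  have hi := DFunLike.congr_fun hmn i
  have hk := DFunLike.congr_fun hmn k
  simp only [Finsupp.add_apply, Finsupp.sub_apply, eps, Finsupp.single_apply,
    hij.symm, hkl.symm, hne.1, hne.2.symm, if_true, if_false] at hi hk
  split_ifs at hi hk <;> omega

section PosRoots

variable {r : ℕ → ℕ → Prop}

lemma mem_posRoots_iff [Std.Irrefl r] {i j : ℕ} : eps i - eps j ∈ posRoots r ↔ r i j := by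
  refine ⟨?_, fun h => ⟨i, j, h, rfl⟩⟩
  rintro ⟨k, l, hkl, h⟩
  obtain ⟨rfl, rfl⟩ := (eps_sub_eps_inj (ne_of_irrefl hkl)).1 h.symm
  exact hkl

lemma posRoots_inj [Std.Irrefl r] {s : ℕ → ℕ → Prop} [Std.Irrefl s] :
    posRoots r = posRoots s ↔ r = s := by
  refine ⟨fun h => ?_, congrArg posRoots⟩
  ext i j
  rw [← mem_posRoots_iff (r := r), ← mem_posRoots_iff (r := s), h]

lemma posRoots_subset_Delta [Std.Irrefl r] : posRoots r ⊆ Delta := by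
  rintro _ ⟨i, j, hij, rfl⟩
  exact eps_sub_eps_mem_Delta.2 (ne_of_irrefl hij)

lemma neg_posRoots : -posRoots r = posRoots (flip r) := by
  ext x
  constructor
  · rintro ⟨i, j, hij, hx⟩
    exact ⟨j, i, hij, by rw [← neg_eps_sub_eps, ← hx, neg_neg]⟩
  · rintro ⟨i, j, hij, rfl⟩
    exact ⟨j, i, hij, neg_eps_sub_eps i j⟩

lemma posRoots_union_neg [IsStrictTotalOrder ℕ r] : posRoots r ∪ -posRoots r = Delta := by
  have : Std.Irrefl (flip r) := ⟨irrefl_of r⟩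
  refine subset_antisymm
    (Set.union_subset posRoots_subset_Delta (neg_posRoots (r := r) ▸ posRoots_subset_Delta)) ?_
  rintro _ ⟨i, j, hij, rfl⟩
  rw [neg_posRoots]
  rcases trichotomous_of r i j with h | h | h
  · exact Or.inl ⟨i, j, h, rfl⟩
  · exact absurd h hij
  · exact Or.inr ⟨i, j, h, rfl⟩

lemma posRoots_inter_neg [IsStrictOrder ℕ r] : posRoots r ∩ -posRoots r = ∅ := by
  have : Std.Irrefl (flip r) := ⟨irrefl_of r⟩
  rw [neg_posRoots, Set.eq_empty_iff_forall_notMem]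
  rintro _ ⟨⟨i, j, hij, rfl⟩, hji⟩
  exact asymm_of r hij (mem_posRoots_iff (r := flip r) |>.1 hji)

lemma add_mem_posRoots [IsStrictOrder ℕ r] {α β : ℕ →₀ ℤ} (hα : α ∈ posRoots r)
    (hβ : β ∈ posRoots r) (h : α + β ∈ Delta) : α + β ∈ posRoots r := by
  obtain ⟨i, j, hij, rfl⟩ := hα
  obtain ⟨k, l, hkl, rfl⟩ := hβ
  rcases eq_or_eq_of_eps_sub_eps_add_eps_sub_eps_mem_Delta (ne_of_irrefl hij) (ne_of_irrefl hkl) h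
    with rfl | rfl
  · rw [eps_sub_eps_add_eps_sub_eps]
    exact ⟨i, l, trans_of r hij hkl, rfl⟩
  · rw [add_comm, eps_sub_eps_add_eps_sub_eps]
    exact ⟨k, j, trans_of r hkl hij, rfl⟩

end PosRoots

section RootOrder

def rootOrder (P : Set (ℕ →₀ ℤ)) (i j : ℕ) : Prop := eps i - eps j ∈ P

variable {P : Set (ℕ →₀ ℤ)}

lemma eq_posRoots_rootOrder (hP : P ⊆ Delta) : P = posRoots (rootOrder P) := by
  refine subset_antisymm (fun x hx => ?_) ?_
  · obtain ⟨i, j, -, rfl⟩ := hP hx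
    exact ⟨i, j, hx, rfl⟩
  · rintro _ ⟨i, j, hij, rfl⟩
    exact hij

lemma isStrictTotalOrder_rootOrder (hU : P ∪ -P = Delta) (hI : P ∩ -P = ∅)
    (hC : ∀ α β, α ∈ P → β ∈ P → α + β ∈ Delta → α + β ∈ P) :
    IsStrictTotalOrder ℕ (rootOrder P) := by
  have asymm {i j : ℕ} (hij : rootOrder P i j) : ¬rootOrder P j i := fun hji =>
    (Set.eq_empty_iff_forall_notMem.1 hI) _ ⟨hij, by rwa [Set.mem_neg, neg_eps_sub_eps]⟩
  refine { trichotomous := fun i j hnij hnji => ?_, irrefl := fun i hii => ?_,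
           trans := fun i j k hij hjk => ?_ }
  · by_contra hne
    have : eps i - eps j ∈ P ∪ -P := hU ▸ eps_sub_eps_mem_Delta.2 hne
    rw [Set.mem_union, Set.mem_neg, neg_eps_sub_eps] at this
    exact this.elim hnij hnji
  · exact asymm hii hii
  · have hik : i ≠ k := by
      rintro rfl
      exact asymm hij hjk
    have := hC _ _ hij hjk
    rw [eps_sub_eps_add_eps_sub_eps] at this
    exact this (eps_sub_eps_mem_Delta.2 hik)

end RootOrder

theorem stmt0 :
    (∀ P : Set (ℕ →₀ ℤ),
      P ∪ -P = Delta →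
      P ∩ -P = ∅ →
      (∀ α β, α ∈ P → β ∈ P → α + β ∈ Delta → α + β ∈ P) →
      ∃! r : ℕ → ℕ → Prop, IsStrictTotalOrder ℕ r ∧ P = posRoots r) ∧
    (∀ r : ℕ → ℕ → Prop, IsStrictTotalOrder ℕ r →
      posRoots r ∪ -(posRoots r) = Delta ∧
      posRoots r ∩ -(posRoots r) = ∅ ∧
      (∀ α β, α ∈ posRoots r → β ∈ posRoots r → α + β ∈ Delta → α + β ∈ posRoots r)) := by
  refine ⟨fun P hU hI hC => ?_, fun r _ =>
    ⟨posRoots_union_neg, posRoots_inter_neg, fun _ _ => add_mem_posRoots⟩⟩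
  have hP : P ⊆ Delta := hU ▸ Set.subset_union_left
  have hord := isStrictTotalOrder_rootOrder hU hI hC
  refine ⟨rootOrder P, ⟨hord, eq_posRoots_rootOrder hP⟩, fun r ⟨_, hr⟩ => ?_⟩
  rw [← posRoots_inj, ← hr, ← eq_posRoots_rootOrder hP]
end

section
/- Let ≺ be a strict total order on ℕ. Then every positive root ε_i − ε_j with i ≺ j lies in the additive submonoid of (ℕ →₀ ℤ) generated by the simple roots if and only if for all i ≺ j the closed interval {k ∈ ℕ : i ≼ k ≼ j} is finite. -/
/-- The simple roots attached to a strict order `r` on `ℕ`: the `ε_a - ε_b` with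
`a ≺ b` and no `c` strictly between `a` and `b`. -/
def simpleRoots (r : ℕ → ℕ → Prop) : Set (ℕ →₀ ℤ) :=
  {x | ∃ a b : ℕ, r a b ∧ (¬ ∃ c : ℕ, r a c ∧ r c b) ∧ x = eps a - eps b}

/-!
For a linear order, the additive functional `x ↦ ∑_{m < k} x m` on `α →₀ ℤ` is nonzero on
`ε_a - ε_b` (`a ≤ b`) exactly for `k ∈ (a, b]`; on a simple root `a ⋖ b`, only at `k = b`. The set
of `k` where it is nonzero on a sum lies in the union of these sets for the summands, so it is
finite on the closure of the simple roots. Hence `ε_i - ε_j` in the closure forces `(i, j]` to be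
finite.

Conversely, if all closed intervals are finite, `<` is the transitive closure of `⋖`, and
`ε_i - ε_j` telescopes into a sum of simple roots along a covering chain from `i` to `j`.
-/

open Finsupp Relation

variable {α : Type*}

def covByDiffs [Preorder α] {G : Type*} [AddGroup G] (f : α → G) : Set G :=
  {x | ∃ a b, a ⋖ b ∧ x = f a - f b}

theorem sub_mem_closure_covByDiffs [Preorder α] [LocallyFiniteOrder α] {G : Type*} [AddGroup G]
    (f : α → G) {a b : α} (hab : a < b) : f a - f b ∈ AddSubmonoid.closure (covByDiffs f) := by
  have hchain := transGen_covBy_of_lt hab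
  clear hab
  induction hchain with
  | single hac => exact AddSubmonoid.subset_closure ⟨_, _, hac, rfl⟩
  | @tail c d _ hcd ih =>
    rw [← sub_add_sub_cancel _ (f c)]
    exact add_mem ih (AddSubmonoid.subset_closure ⟨_, _, hcd, rfl⟩)

section LinearOrder

variable [LinearOrder α]

noncomputable def sumBelow (k : α) : (α →₀ ℤ) →+ ℤ :=
  liftAddHom fun m => if m < k then AddMonoidHom.id ℤ else 0

theorem sumBelow_single (k m : α) (c : ℤ) :
    sumBelow k (single m c) = if m < k then c else 0 := by
  rw [sumBelow, liftAddHom_apply_single]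
  split_ifs <;> rfl

def sumBelowSupport (x : α →₀ ℤ) : Set α := {k | sumBelow k x ≠ 0}

theorem sumBelowSupport_single_sub_single {a b : α} (hab : a ≤ b) :
    sumBelowSupport (single a 1 - single b 1) = Set.Ioc a b := by
  ext k
  simp only [sumBelowSupport, Set.mem_ofPred_eq, map_sub, sumBelow_single, Set.mem_Ioc]
  split_ifs <;> grind

theorem sumBelowSupport_add_subset (x y : α →₀ ℤ) :
    sumBelowSupport (x + y) ⊆ sumBelowSupport x ∪ sumBelowSupport y := by
  intro k hk
  contrapose! hk
  simp only [sumBelowSupport, Set.mem_union, Set.mem_ofPred_eq, not_or, not_not] at hk ⊢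
  rw [map_add, hk.1, hk.2, add_zero]

def finiteSumBelowSupport : AddSubmonoid (α →₀ ℤ) where
  carrier := {x | (sumBelowSupport x).Finite}
  add_mem' hx hy := (hx.union hy).subset (sumBelowSupport_add_subset _ _)
  zero_mem' := by simp [sumBelowSupport]

theorem closure_covByDiffs_le_finiteSumBelowSupport :
    AddSubmonoid.closure (covByDiffs fun a : α => single a (1 : ℤ)) ≤ finiteSumBelowSupport := by
  rw [AddSubmonoid.closure_le]
  rintro _ ⟨a, b, hab, rfl⟩
  change (sumBelowSupport _).Finite
  rw [sumBelowSupport_single_sub_single hab.le, hab.Ioc_eq]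
  exact Set.finite_singleton b

theorem finite_Icc_of_mem_closure_covByDiffs {a b : α} (hab : a ≤ b)
    (h : single a 1 - single b 1 ∈
      AddSubmonoid.closure (covByDiffs fun a : α => single a (1 : ℤ))) :
    (Set.Icc a b).Finite := by
  have hIoc : (Set.Ioc a b).Finite := by
    rw [← sumBelowSupport_single_sub_single hab]
    exact closure_covByDiffs_le_finiteSumBelowSupport h
  rw [← Set.Ioc_union_left hab]
  exact hIoc.union (Set.finite_singleton a)

theorem forall_mem_closure_covByDiffs_iff :
    (∀ a b : α, a < b →
      single a 1 - single b 1 ∈ AddSubmonoid.closure (covByDiffs fun a : α => single a (1 : ℤ))) ↔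
    ∀ a b : α, a < b → (Set.Icc a b).Finite := by
  refine ⟨fun h a b hab => finite_Icc_of_mem_closure_covByDiffs hab.le (h a b hab),
    fun h a b hab => ?_⟩
  have hIcc (c d : α) : (Set.Icc c d).Finite := by
    rcases lt_trichotomy c d with hcd | rfl | hdc
    · exact h c d hcd
    · simp
    · simp [Set.Icc_eq_empty_of_lt hdc]
  let _ : LocallyFiniteOrder α := LocallyFiniteOrder.ofFiniteIcc hIcc
  exact sub_mem_closure_covByDiffs _ hab

end LinearOrder

-- In `linearOrderOfSTO r`, `<` is `r` and `≤` is `fun i k => i = k ∨ r i k`.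
theorem IsStrictTotalOrder.forall_mem_closure_iff (r : α → α → Prop) [IsStrictTotalOrder α r] :
    (∀ i j : α, r i j → single i 1 - single j 1 ∈ AddSubmonoid.closure
      {x | ∃ a b : α, r a b ∧ (¬ ∃ c : α, r a c ∧ r c b) ∧ x = single a (1 : ℤ) - single b 1}) ↔
    ∀ i j : α, r i j → {k : α | (i = k ∨ r i k) ∧ (k = j ∨ r k j)}.Finite := by
  classical
  let _ : LinearOrder α := linearOrderOfSTO r
  have hroots :
      {x | ∃ a b : α, r a b ∧ (¬ ∃ c : α, r a c ∧ r c b) ∧ x = single a (1 : ℤ) - single b 1} =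
        covByDiffs fun a : α => single a (1 : ℤ) := by
    simp only [covByDiffs, CovBy, not_exists, not_and, and_assoc]
    rfl
  rw [hroots]
  exact forall_mem_closure_covByDiffs_iff

theorem stmt1 (r : ℕ → ℕ → Prop) (hr : IsStrictTotalOrder ℕ r) :
    (∀ i j : ℕ, r i j → eps i - eps j ∈ AddSubmonoid.closure (simpleRoots r)) ↔
    (∀ i j : ℕ, r i j → {k : ℕ | (i = k ∨ r i k) ∧ (k = j ∨ r k j)}.Finite) :=
  IsStrictTotalOrder.forall_mem_closure_iff r
end

section
/- Let ≺ be a strict total order on ℕ. Then the following are equivalent: (a) for all i ≺ j the closed interval {k ∈ ℕ : i ≼ k ≼ j} is finite; (b) for every ν ∈ (ℕ →₀ ℤ), the set of multisets m of elements of (ℕ →₀ ℤ) such that every element of m is a positive root (i.e., of the form ε_i − ε_j with i ≺ j) and the sum of m equals ν, is finite. (Statement (b) is the finiteness of the Kostant partition function, equivalently the finite-dimensionality of the weight spaces of the enveloping algebra U(n⁻) for a Dynkin Borel subalgebra of sl(∞).) -/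
/-!
Let `partialSum S x` be the sum of the coefficients of `x` over `S`. On a positive root
`ε i - ε j` it is `0` or `1` when `S` is a lower set, and `1` for `S = Iic i`; on upper sets the
signs are reversed. Hence if `ε i - ε j` occurs in a Kostant partition of `ν`, then
`partialSum (Iic i) ν ≥ 1` and `partialSum (Ici j) ν ≤ -1`, so `i` and `j` lie in the order hull of
the support of `ν`, and only the finitely many roots inside it can occur. Summing
`partialSum (Iic k)` over the `k` in the hull gives an additive height that is at least `1` on each
of them, which bounds the size of the partition. Conversely, every `k` strictly between `i` and `j`
gives the partition `(ε i - ε k) + (ε k - ε j)` of `ε i - ε j`.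
-/

open Finsupp Set

variable {α : Type*}

section Multiset

variable {M N : Type*} [AddCommMonoid M] [AddCommMonoid N] [PartialOrder N] [IsOrderedAddMonoid N]

theorem AddMonoidHom.le_map_multiset_sum (f : M →+ N) {m : Multiset M} (hf : ∀ y ∈ m, 0 ≤ f y)
    {x : M} (hx : x ∈ m) : f x ≤ f m.sum := by
  rw [map_multiset_sum]
  exact Multiset.single_le_sum (by simpa using hf) _ (Multiset.mem_map_of_mem f hx)

theorem AddMonoidHom.card_nsmul_le_map_multiset_sum (f : M →+ N) {m : Multiset M} {a : N}
    (hf : ∀ y ∈ m, a ≤ f y) : Multiset.card m • a ≤ f m.sum := by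
  rw [map_multiset_sum, ← Multiset.card_map f]
  exact Multiset.card_nsmul_le_sum (by simpa using hf)

theorem Multiset.finite_setOf_forall_mem_card_le {β : Type*} {s : Set β} (hs : s.Finite) (n : ℕ) :
    {m : Multiset β | (∀ x ∈ m, x ∈ s) ∧ Multiset.card m ≤ n}.Finite := by
  classical
  refine (Set.finite_Iic (n • hs.toFinset.val)).subset fun m ⟨hmem, hcard⟩ => ?_
  refine Multiset.le_iff_count.2 fun x => ?_
  by_cases hx : x ∈ m
  · rw [Multiset.count_nsmul, Multiset.count_eq_one_of_mem hs.toFinset.nodup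
      (by simpa using hmem x hx), mul_one]
    exact (Multiset.count_le_card x m).trans hcard
  · simp [Multiset.count_eq_zero_of_notMem hx]

end Multiset

section Roots

def IsPositiveRoot [LT α] (x : α →₀ ℤ) : Prop :=
  ∃ i j, i < j ∧ x = single i 1 - single j 1

def kostantPartitions [LT α] (ν : α →₀ ℤ) : Set (Multiset (α →₀ ℤ)) :=
  {m | (∀ x ∈ m, IsPositiveRoot x) ∧ m.sum = ν}

open Classical in
noncomputable def partialSum (S : Set α) : (α →₀ ℤ) →+ ℤ :=
  liftAddHom fun l => if l ∈ S then AddMonoidHom.id ℤ else 0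

open Classical in
theorem partialSum_single (S : Set α) (i : α) (c : ℤ) :
    partialSum S (single i c) = if i ∈ S then c else 0 := by
  rw [partialSum, liftAddHom_apply_single]
  split_ifs <;> rfl

theorem exists_mem_support_of_partialSum_ne_zero {S : Set α} {x : α →₀ ℤ}
    (h : partialSum S x ≠ 0) : ∃ l ∈ x.support, l ∈ S := by
  contrapose! h
  rw [partialSum, liftAddHom_apply]
  exact Finset.sum_eq_zero fun l hl => by simp [h l hl]

variable [Preorder α] {i j : α}

theorem partialSum_Iic_root_nonneg (k : α) (hij : i < j) :
    0 ≤ partialSum (Iic k) (single i 1 - single j 1) := by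
  simp only [map_sub, partialSum_single, mem_Iic]
  split_ifs with hi hj hj <;> first | exact absurd (hij.le.trans hj) hi | norm_num

theorem partialSum_Iic_root_self (hij : i < j) :
    partialSum (Iic i) (single i 1 - single j 1) = 1 := by
  simp [partialSum_single, hij.not_ge]

theorem partialSum_Ici_root_nonpos (k : α) (hij : i < j) :
    partialSum (Ici k) (single i 1 - single j 1) ≤ 0 := by
  simp only [map_sub, partialSum_single, mem_Ici]
  split_ifs with hi hj <;> first | exact absurd (hi.trans hij.le) hj | norm_num

theorem partialSum_Ici_root_self (hij : i < j) :
    partialSum (Ici j) (single i 1 - single j 1) = -1 := by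
  simp [partialSum_single, hij.not_ge]

theorem exists_support_le_and_ge_of_mem_kostantPartitions {ν : α →₀ ℤ}
    {m : Multiset (α →₀ ℤ)} (hm : m ∈ kostantPartitions ν) (hij : i < j)
    (hx : single i 1 - single j 1 ∈ m) :
    (∃ a ∈ ν.support, a ≤ i) ∧ ∃ b ∈ ν.support, j ≤ b := by
  obtain ⟨hroots, rfl⟩ := hm
  constructor
  · refine exists_mem_support_of_partialSum_ne_zero (S := Iic i) (ne_of_gt ?_)
    calc 0 < partialSum (Iic i) (single i 1 - single j 1) := by
          rw [partialSum_Iic_root_self hij]; exact one_pos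
      _ ≤ partialSum (Iic i) m.sum := AddMonoidHom.le_map_multiset_sum _ (fun y hy => by
          obtain ⟨p, q, hpq, rfl⟩ := hroots y hy
          exact partialSum_Iic_root_nonneg i hpq) hx
  · refine exists_mem_support_of_partialSum_ne_zero (S := Ici j) (ne_of_lt ?_)
    have := AddMonoidHom.le_map_multiset_sum (-partialSum (Ici j)) (fun y hy => by
      obtain ⟨p, q, hpq, rfl⟩ := hroots y hy
      simpa using partialSum_Ici_root_nonpos j hpq) hx
    simp only [AddMonoidHom.neg_apply, partialSum_Ici_root_self hij] at this
    omega

noncomputable def heightOn (W : Finset α) : (α →₀ ℤ) →+ ℤ :=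
  ∑ k ∈ W, partialSum (Iic k)

theorem one_le_heightOn_root {W : Finset α} (hi : i ∈ W) (hij : i < j) :
    1 ≤ heightOn W (single i 1 - single j 1) := by
  rw [heightOn, AddMonoidHom.finsetSum_apply]
  calc 1 = partialSum (Iic i) (single i 1 - single j 1) := (partialSum_Iic_root_self hij).symm
    _ ≤ _ := Finset.single_le_sum (fun k _ => partialSum_Iic_root_nonneg k hij) hi

variable [LocallyFiniteOrder α]

open Classical in
noncomputable def supportHull (ν : α →₀ ℤ) : Finset α :=
  ν.support.biUnion fun a => ν.support.biUnion fun b => Finset.Icc a b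

theorem mem_supportHull_of_mem_kostantPartitions {ν : α →₀ ℤ} {m : Multiset (α →₀ ℤ)}
    (hm : m ∈ kostantPartitions ν) (hij : i < j) (hx : single i 1 - single j 1 ∈ m) :
    i ∈ supportHull ν ∧ j ∈ supportHull ν := by
  obtain ⟨⟨a, ha, hai⟩, ⟨b, hb, hjb⟩⟩ := exists_support_le_and_ge_of_mem_kostantPartitions hm hij hx
  simp only [supportHull, Finset.mem_biUnion, Finset.mem_Icc]
  exact ⟨⟨a, ha, b, hb, hai, hij.le.trans hjb⟩, ⟨a, ha, b, hb, hai.trans hij.le, hjb⟩⟩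

theorem card_le_heightOn_supportHull {ν : α →₀ ℤ} {m : Multiset (α →₀ ℤ)}
    (hm : m ∈ kostantPartitions ν) : (Multiset.card m : ℤ) ≤ heightOn (supportHull ν) ν := by
  have h := AddMonoidHom.card_nsmul_le_map_multiset_sum (heightOn (supportHull ν)) (a := 1)
    (m := m) fun x hx => by
      obtain ⟨i, j, hij, rfl⟩ := hm.1 x hx
      exact one_le_heightOn_root (mem_supportHull_of_mem_kostantPartitions hm hij hx).1 hij
  rwa [nsmul_one, hm.2] at h

theorem finite_kostantPartitions (ν : α →₀ ℤ) : (kostantPartitions ν).Finite := by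
  have hroots : (image2 (fun i j => single i (1 : ℤ) - single j 1)
      (supportHull ν : Set α) (supportHull ν)).Finite :=
    (supportHull ν).finite_toSet.image2 _ (supportHull ν).finite_toSet
  refine (Multiset.finite_setOf_forall_mem_card_le hroots (heightOn (supportHull ν) ν).toNat).subset
    fun m hm => ⟨fun x hx => ?_, ?_⟩
  · obtain ⟨i, j, hij, rfl⟩ := hm.1 x hx
    obtain ⟨hi, hj⟩ := mem_supportHull_of_mem_kostantPartitions hm hij hx
    exact mem_image2_of_mem hi hj
  · have := card_le_heightOn_supportHull hm
    omega

end Roots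

theorem finite_Ioo_of_finite_kostantPartitions [Preorder α] {i j : α}
    (h : (kostantPartitions (single i 1 - single j 1)).Finite) : (Ioo i j).Finite := by
  have hinj : Function.Injective fun k : α => single i (1 : ℤ) - single k 1 :=
    fun k k' e => single_left_injective one_ne_zero (sub_right_injective e)
  refine ((h.biUnion fun m _ => m.finite_toSet).preimage hinj.injOn).subset fun k ⟨hik, hkj⟩ => ?_
  refine mem_biUnion (x := {single i 1 - single k 1, single k 1 - single j 1}) ⟨?_, ?_⟩ ?_
  · simp only [Multiset.insert_eq_cons, Multiset.mem_cons, Multiset.mem_singleton]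
    rintro x (rfl | rfl)
    exacts [⟨i, k, hik, rfl⟩, ⟨k, j, hkj, rfl⟩]
  · simp
  · simp

theorem finite_Icc_of_forall_lt [PartialOrder α] (h : ∀ a b : α, a < b → (Icc a b).Finite)
    (a b : α) : (Icc a b).Finite := by
  rcases eq_or_ne a b with rfl | hne
  · simp
  by_cases hab : a ≤ b
  · exact h a b (hab.lt_of_ne hne)
  · simp [Icc_eq_empty hab]

theorem finite_Icc_iff_finite_kostantPartitions [PartialOrder α] :
    (∀ i j : α, i < j → (Icc i j).Finite) ↔ ∀ ν : α →₀ ℤ, (kostantPartitions ν).Finite := by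
  constructor
  · intro hfin
    let := LocallyFiniteOrder.ofFiniteIcc (finite_Icc_of_forall_lt hfin)
    exact finite_kostantPartitions
  · intro hfin i j hij
    rw [← Ico_insert_right hij.le, ← Ioo_insert_left hij]
    exact ((finite_Ioo_of_finite_kostantPartitions (hfin _)).insert i).insert j

theorem stmt4 (r : ℕ → ℕ → Prop) (hr : IsStrictTotalOrder ℕ r) :
    (∀ i j : ℕ, r i j → {k : ℕ | (i = k ∨ r i k) ∧ (k = j ∨ r k j)}.Finite) ↔
    (∀ ν : ℕ →₀ ℤ,
      {m : Multiset (ℕ →₀ ℤ) |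
        (∀ x ∈ m, ∃ i j : ℕ, r i j ∧ x = eps i - eps j) ∧ m.sum = ν}.Finite) :=
  @finite_Icc_iff_finite_kostantPartitions ℕ (partialOrderOfSO r)
end
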